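/- arXiv:2005.01519 — 3 statements merged into one kernel-verified Lean document; each statement's English description precedes it below -/
import Mathlib

section
/- If (A, D(A)) is the generator of a strongly continuous semigroup (S(t)) on a Hilbert space H, H decomposes orthogonally as H = H₀ ⊕ H₁ with both subspaces closed and invariant under S(t), and ‖S(t)x₀‖ ≤ e^{−λ₀ t}‖x₀‖ for x₀ ∈ H₀ and ‖S(t)x₁‖ ≤ e^{λ₁ t}‖x₁‖ for x₁ ∈ H₁ (λ₀ > 0, λ₁ ≥ 0), then for all x ∈ D(A): ⟨Ax, x⟩ ≤ −λ₀‖x‖² + (λ₀ + λ₁)‖P₁x‖², where P₁ is the orthogonal projection onto H₁. -/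
open scoped RealInnerProductSpace

open Set

/-!
Split `x = x₀ + x₁` with `x₀ ∈ H₀`, `x₁ = P₁ x ∈ H₁`. Since the semigroup keeps the two components
orthogonal, `‖S t x‖² ≤ e^{-2λ₀t}‖x₀‖² + e^{2λ₁t}‖x₁‖²` for `t ≥ 0`, with equality at `t = 0`.
Comparing right derivatives at `0` gives `2⟪A x, x⟫ ≤ -2λ₀‖x₀‖² + 2λ₁‖x₁‖²`, and Pythagoras
`‖x₀‖² = ‖x‖² - ‖x₁‖²` turns this into the claim.
-/

theorem HasDerivWithinAt.le_of_le_on_Ici {f g : ℝ → ℝ} {f' g' a : ℝ}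
    (hf : HasDerivWithinAt f f' (Ici a) a) (hg : HasDerivWithinAt g g' (Ici a) a)
    (ha : f a = g a) (hle : ∀ t ∈ Ici a, f t ≤ g t) : f' ≤ g' := by
  have hmax : IsLocalMaxOn (f - g) (Ici a) a :=
    IsMaxOn.localize fun t ht => by simpa [ha] using hle t ht
  have hone : (1 : ℝ) ∈ posTangentConeAt (Ici a) a :=
    mem_posTangentConeAt_of_segment_subset (by simp [segment_eq_Icc, Icc_subset_Ici_self])
  simpa using hmax.hasFDerivWithinAt_nonpos (hf.sub hg).hasFDerivWithinAt hone

theorem norm_map_add_sq_le_of_mem_orthogonal {E F : Type*} [NormedAddCommGroup E]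
    [NormedAddCommGroup F] [InnerProductSpace ℝ F] [Module ℝ E] {K : Submodule ℝ F}
    (T : E →ₗ[ℝ] F) {x₀ x₁ : E} {a b : ℝ} (hT₀ : T x₀ ∈ K) (hT₁ : T x₁ ∈ Kᗮ)
    (h₀ : ‖T x₀‖ ≤ a * ‖x₀‖) (h₁ : ‖T x₁‖ ≤ b * ‖x₁‖) :
    ‖T (x₀ + x₁)‖ ^ 2 ≤ a ^ 2 * ‖x₀‖ ^ 2 + b ^ 2 * ‖x₁‖ ^ 2 := by
  have hperp : ⟪T x₀, T x₁⟫ = 0 := Submodule.inner_right_of_mem_orthogonal hT₀ hT₁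
  rw [map_add, norm_add_sq_real, hperp, mul_zero, add_zero, ← mul_pow, ← mul_pow]
  gcongr

theorem hasDerivAt_exp_mul_sq (c t : ℝ) :
    HasDerivAt (fun s => Real.exp (c * s) ^ 2) (2 * c * Real.exp (c * t) ^ 2) t := by
  refine (((hasDerivAt_id' t).const_mul c).exp.pow 2).congr_deriv ?_
  push_cast
  ring

theorem stmt0_general
    {H : Type*} [NormedAddCommGroup H] [InnerProductSpace ℝ H]
    (S : ℝ → H →L[ℝ] H)
    (hS0 : S 0 = ContinuousLinearMap.id ℝ H)
    (H₀ H₁ : Submodule ℝ H) [Submodule.HasOrthogonalProjection H₀] [Submodule.HasOrthogonalProjection H₁]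
    (horth : H₁ = H₀ᗮ)
    (hinv0 : ∀ t ≥ (0:ℝ), ∀ x ∈ H₀, S t x ∈ H₀)
    (hinv1 : ∀ t ≥ (0:ℝ), ∀ x ∈ H₁, S t x ∈ H₁)
    (lam₀ lam₁ : ℝ)
    (hc0 : ∀ t ≥ (0:ℝ), ∀ x ∈ H₀, ‖S t x‖ ≤ Real.exp (-lam₀ * t) * ‖x‖)
    (hc1 : ∀ t ≥ (0:ℝ), ∀ x ∈ H₁, ‖S t x‖ ≤ Real.exp (lam₁ * t) * ‖x‖)
    (D : Set H) (A : H → H)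
    (hgen : ∀ x ∈ D, HasDerivWithinAt (fun t => S t x) (A x) (Set.Ici 0) 0) :
    ∀ x ∈ D, ⟪A x, x⟫ ≤ -lam₀ * ‖x‖ ^ 2
      + (lam₀ + lam₁) * ‖(H₁.orthogonalProjectionOnto x : H)‖ ^ 2 := by
  intro x hx
  set x₁ : H := (H₁.orthogonalProjectionOnto x : H)
  have hx₁ : x₁ ∈ H₁ := (H₁.orthogonalProjectionOnto x).2
  have hx₀ : x - x₁ ∈ H₀ := by
    have h : x - x₁ ∈ H₁ᗮ := H₁.sub_starProjection_mem_orthogonal x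
    rwa [horth, Submodule.orthogonal_orthogonal] at h
  have hpyth : ‖x‖ ^ 2 = ‖x - x₁‖ ^ 2 + ‖x₁‖ ^ 2 := by
    have hperp : ⟪x - x₁, x₁⟫ = 0 := Submodule.inner_right_of_mem_orthogonal hx₀ (horth ▸ hx₁)
    simpa [hperp] using norm_add_sq_real (x - x₁) x₁
  have hbound : ∀ t ∈ Ici (0 : ℝ), ‖S t x‖ ^ 2 ≤
      Real.exp (-lam₀ * t) ^ 2 * ‖x - x₁‖ ^ 2 + Real.exp (lam₁ * t) ^ 2 * ‖x₁‖ ^ 2 := by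
    intro t ht
    simpa using norm_map_add_sq_le_of_mem_orthogonal (K := H₀) (S t).toLinearMap
      (hinv0 t ht _ hx₀) (horth ▸ hinv1 t ht _ hx₁) (hc0 t ht _ hx₀) (hc1 t ht _ hx₁)
  have hbound_deriv := (((hasDerivAt_exp_mul_sq (-lam₀) 0).mul_const (‖x - x₁‖ ^ 2)).add
    ((hasDerivAt_exp_mul_sq lam₁ 0).mul_const (‖x₁‖ ^ 2))).hasDerivWithinAt (s := Ici 0)
  have hderiv_le := (hgen x hx).norm_sq.le_of_le_on_Ici hbound_deriv
    (by simp [hS0, hpyth]) hbound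
  simp only [hS0, ContinuousLinearMap.id_apply, mul_zero, Real.exp_zero, one_pow, mul_one,
    real_inner_comm (A x)] at hderiv_le
  rw [hpyth]
  linarith

theorem stmt0
    {H : Type*} [NormedAddCommGroup H] [InnerProductSpace ℝ H] [CompleteSpace H]
    (S : ℝ → H →L[ℝ] H)
    (hS0 : S 0 = ContinuousLinearMap.id ℝ H)
    (hSadd : ∀ s t : ℝ, 0 ≤ s → 0 ≤ t → S (s + t) = (S s).comp (S t))
    (hScont : ∀ x : H, ContinuousOn (fun t => S t x) (Set.Ici 0))
    (H₀ H₁ : Submodule ℝ H) [Submodule.HasOrthogonalProjection H₀] [Submodule.HasOrthogonalProjection H₁]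
    (horth : H₁ = H₀ᗮ)
    (hinv0 : ∀ t ≥ (0:ℝ), ∀ x ∈ H₀, S t x ∈ H₀)
    (hinv1 : ∀ t ≥ (0:ℝ), ∀ x ∈ H₁, S t x ∈ H₁)
    (lam₀ lam₁ : ℝ) (hlam₀ : 0 < lam₀) (hlam₁ : 0 ≤ lam₁)
    (hc0 : ∀ t ≥ (0:ℝ), ∀ x ∈ H₀, ‖S t x‖ ≤ Real.exp (-lam₀ * t) * ‖x‖)
    (hc1 : ∀ t ≥ (0:ℝ), ∀ x ∈ H₁, ‖S t x‖ ≤ Real.exp (lam₁ * t) * ‖x‖)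
    (D : Set H) (A : H → H)
    (hgen : ∀ x ∈ D, HasDerivWithinAt (fun t => S t x) (A x) (Set.Ici 0) 0) :
    ∀ x ∈ D, ⟪A x, x⟫ ≤ -lam₀ * ‖x‖ ^ 2
      + (lam₀ + lam₁) * ‖(H₁.orthogonalProjectionOnto x : H)‖ ^ 2 :=
  stmt0_general S hS0 H₀ H₁ horth hinv0 hinv1 lam₀ lam₁ hc0 hc1 D A hgen
end

section
/- Suppose (S(t)) is a strongly continuous semigroup on a Hilbert space H, P is an orthogonal projection on H, and there is λ₀ > 0 with ‖S(t)x − Px‖ ≤ e^{−λ₀ t}‖x − Px‖ for all t ≥ 0 and x ∈ H. Then (S(t)) leaves ker(P) and ran(P) invariant; moreover S(t) restricted to ran(P) is the identity and S(t) is a contraction semigroup on H. -/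
/-!
Letting `s → ∞` in `S(s) S(t) x = S(s + t) x` and using `S(s) y → P y` gives `P S(t) = P`,
so `ker P` is invariant; the estimate at `x = P x` shows that `S(t)` fixes `ran P`. A contraction
bound then follows from Pythagoras for `S(t) x = P x + S(t) (x - P x)`, as
`‖S(t) (x - P x)‖ ≤ e^{-λ₀ t} ‖x - P x‖ ≤ ‖x - P x‖`.
-/

open scoped RealInnerProductSpace
open Filter Topology

theorem tendsto_of_norm_sub_le_exp_mul {E : Type*} [SeminormedAddCommGroup E]
    {f : ℝ → E} {a : E} {lam C : ℝ} (hlam : 0 < lam)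
    (h : ∀ t ≥ (0:ℝ), ‖f t - a‖ ≤ Real.exp (-lam * t) * C) :
    Tendsto f atTop (𝓝 a) := by
  rw [tendsto_iff_norm_sub_tendsto_zero]
  have hexp : Tendsto (fun t : ℝ => Real.exp (-lam * t)) atTop (𝓝 0) :=
    Real.tendsto_exp_atBot.comp (tendsto_id.const_mul_atTop_of_neg (neg_lt_zero.2 hlam))
  refine squeeze_zero' (Eventually.of_forall fun _ => norm_nonneg _)
    ((eventually_ge_atTop 0).mono h) ?_
  simpa using hexp.mul_const C

theorem apply_semigroup_eq_of_tendsto {E : Type*} [NormedAddCommGroup E] [NormedSpace ℝ E]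
    {S : ℝ → E →L[ℝ] E} {P : E → E}
    (hSadd : ∀ s t : ℝ, 0 ≤ s → 0 ≤ t → S (s + t) = (S s).comp (S t))
    (hlim : ∀ x, Tendsto (fun s => S s x) atTop (𝓝 (P x))) {t : ℝ} (ht : 0 ≤ t) (x : E) :
    P (S t x) = P x := by
  refine tendsto_nhds_unique (hlim (S t x)) ?_
  refine ((hlim x).comp (tendsto_atTop_add_const_right _ t tendsto_id)).congr' ?_
  filter_upwards [eventually_ge_atTop 0] with s hs
  simp [hSadd s t hs ht]

section OrthogonalProjection

variable {E : Type*} [NormedAddCommGroup E] [InnerProductSpace ℝ E] {P : E →ₗ[ℝ] E}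

theorem norm_map_add_sq_of_map_eq_zero (hsym : ∀ x y, ⟪P x, y⟫ = ⟪x, P y⟫) (x : E) {y : E}
    (hy : P y = 0) : ‖P x + y‖ ^ 2 = ‖P x‖ ^ 2 + ‖y‖ ^ 2 := by
  rw [norm_add_sq_real, hsym, hy, inner_zero_right, mul_zero, add_zero]

theorem norm_apply_le_of_fixes_range_of_contracts_ker (hidem : ∀ x, P (P x) = P x)
    (hsym : ∀ x y, ⟪P x, y⟫ = ⟪x, P y⟫) {T : E →ₗ[ℝ] E}
    (hfix : ∀ x, P x = x → T x = x) (hker : ∀ x, P x = 0 → P (T x) = 0)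
    (hcontr : ∀ x, P x = 0 → ‖T x‖ ≤ ‖x‖) (x : E) : ‖T x‖ ≤ ‖x‖ := by
  have hPker : P (x - P x) = 0 := by rw [map_sub, hidem, sub_self]
  have hdecomp : T x = P x + T (x - P x) := by rw [map_sub, hfix _ (hidem x), add_sub_cancel]
  have hsq : ‖T x‖ ^ 2 ≤ ‖x‖ ^ 2 := calc
    ‖T x‖ ^ 2 = ‖P x‖ ^ 2 + ‖T (x - P x)‖ ^ 2 := by
      rw [hdecomp, norm_map_add_sq_of_map_eq_zero hsym _ (hker _ hPker)]
    _ ≤ ‖P x‖ ^ 2 + ‖x - P x‖ ^ 2 := by gcongr; exact hcontr _ hPker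
    _ = ‖x‖ ^ 2 := by rw [← norm_map_add_sq_of_map_eq_zero hsym _ hPker, add_sub_cancel]
  exact (pow_le_pow_iff_left₀ (norm_nonneg _) (norm_nonneg _) two_ne_zero).1 hsq

end OrthogonalProjection

theorem stmt2_general
    {H : Type*} [NormedAddCommGroup H] [InnerProductSpace ℝ H]
    (S : ℝ → H →L[ℝ] H)
    (hSadd : ∀ s t : ℝ, 0 ≤ s → 0 ≤ t → S (s + t) = (S s).comp (S t))
    (P : H →L[ℝ] H)
    (hidem : ∀ x, P (P x) = P x)
    (hsym : ∀ x y, ⟪P x, y⟫ = ⟪x, P y⟫)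
    (lam₀ : ℝ) (hlam₀ : 0 < lam₀)
    (hest : ∀ t ≥ (0:ℝ), ∀ x : H, ‖S t x - P x‖ ≤ Real.exp (-lam₀ * t) * ‖x - P x‖) :
    (∀ t ≥ (0:ℝ), ∀ x : H, P x = 0 → P (S t x) = 0) ∧
    (∀ t ≥ (0:ℝ), ∀ x : H, P x = x → S t x ∈ Set.range P) ∧
    (∀ t ≥ (0:ℝ), ∀ x : H, P x = x → S t x = x) ∧
    (∀ t ≥ (0:ℝ), ∀ x : H, ‖S t x‖ ≤ ‖x‖) := by
  have hlim (x : H) : Tendsto (fun s => S s x) atTop (𝓝 (P x)) :=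
    tendsto_of_norm_sub_le_exp_mul hlam₀ fun t ht => hest t ht x
  have hker : ∀ t ≥ (0:ℝ), ∀ x : H, P x = 0 → P (S t x) = 0 := fun t ht x hx =>
    (apply_semigroup_eq_of_tendsto hSadd hlim ht x).trans hx
  have hfix : ∀ t ≥ (0:ℝ), ∀ x : H, P x = x → S t x = x := fun t ht x hx => by
    simpa [hx, sub_eq_zero] using hest t ht x
  have hcontr_ker : ∀ t ≥ (0:ℝ), ∀ x : H, P x = 0 → ‖S t x‖ ≤ ‖x‖ := fun t ht x hx => by
    have hexp_le_one : Real.exp (-lam₀ * t) ≤ 1 := Real.exp_le_one_iff.2 (by nlinarith)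
    simpa [hx] using (hest t ht x).trans (mul_le_of_le_one_left (norm_nonneg _) hexp_le_one)
  refine ⟨hker, fun t ht x hx => ⟨x, hx.trans (hfix t ht x hx).symm⟩, hfix, fun t ht x => ?_⟩
  exact norm_apply_le_of_fixes_range_of_contracts_ker (P := (P : H →ₗ[ℝ] H))
    (T := (S t : H →ₗ[ℝ] H)) hidem hsym (hfix t ht) (hker t ht) (hcontr_ker t ht) x

theorem stmt2
    {H : Type*} [NormedAddCommGroup H] [InnerProductSpace ℝ H] [CompleteSpace H]
    (S : ℝ → H →L[ℝ] H)
    (hS0 : S 0 = ContinuousLinearMap.id ℝ H)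
    (hSadd : ∀ s t : ℝ, 0 ≤ s → 0 ≤ t → S (s + t) = (S s).comp (S t))
    (hScont : ∀ x : H, ContinuousOn (fun t => S t x) (Set.Ici 0))
    (P : H →L[ℝ] H)
    (hidem : ∀ x, P (P x) = P x)
    (hsym : ∀ x y, ⟪P x, y⟫ = ⟪x, P y⟫)
    (lam₀ : ℝ) (hlam₀ : 0 < lam₀)
    (hest : ∀ t ≥ (0:ℝ), ∀ x : H, ‖S t x - P x‖ ≤ Real.exp (-lam₀ * t) * ‖x - P x‖) :
    (∀ t ≥ (0:ℝ), ∀ x : H, P x = 0 → P (S t x) = 0) ∧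
    (∀ t ≥ (0:ℝ), ∀ x : H, P x = x → S t x ∈ Set.range P) ∧
    (∀ t ≥ (0:ℝ), ∀ x : H, P x = x → S t x = x) ∧
    (∀ t ≥ (0:ℝ), ∀ x : H, ‖S t x‖ ≤ ‖x‖) :=
  stmt2_general S hSadd P hidem hsym lam₀ hlam₀ hest
end

section
/- Define σ¹(h)(x) = ∫_x^∞ min(e^{−βy}, |h'(y)|) dy for h in the Filipović space H_β. Then σ¹(h) ∈ H_β⁰ (long rate zero) with ‖σ¹(h)‖²_β ≤ 1/β, and σ¹ is Lipschitz: ‖σ¹(h₁) − σ¹(h₂)‖²_β ≤ ‖h₁ − h₂‖²_β for all h₁, h₂ ∈ H_β. Moreover σ¹(c) = 0 for every constant function c. -/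
open MeasureTheory Filter Real Set

/-! Both the volatility `min(e^{-βy}, |h'(y)|)` and its square weighted by `e^{βy}` are dominated
by `e^{-βy}`, whose integral over `[x, ∞)` is `e^{-βx}/β`; this gives the long rate zero and the
norm bound. The Lipschitz bound is pointwise: `t ↦ min(c, |t|)` is 1-Lipschitz. -/

section ExpDominated

variable {β : ℝ} (hβ : 0 < β) {f : ℝ → ℝ}
include hβ

lemma integral_Ici_exp_neg_mul (x : ℝ) : ∫ y in Ici x, exp (-β * y) = exp (-β * x) / β := by
  rw [integral_Ici_eq_integral_Ioi, integral_exp_mul_Ioi (neg_neg_of_pos hβ), neg_div_neg_eq]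

lemma setIntegral_Ici_le_of_le_exp_neg_mul (hf₀ : ∀ y, 0 ≤ f y)
    (hf : ∀ y, f y ≤ exp (-β * y)) (x : ℝ) : ∫ y in Ici x, f y ≤ exp (-β * x) / β := by
  rw [← integral_Ici_exp_neg_mul hβ]
  exact integral_mono_of_nonneg (ae_of_all _ hf₀)
    (Iff.mpr integrableOn_Ici_iff_integrableOn_Ioi (exp_neg_integrableOn_Ioi x hβ)) (ae_of_all _ hf)

lemma tendsto_setIntegral_Ici_of_le_exp_neg_mul (hf₀ : ∀ y, 0 ≤ f y)
    (hf : ∀ y, f y ≤ exp (-β * y)) :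
    Tendsto (fun x => ∫ y in Ici x, f y) atTop (nhds 0) := by
  have hexp : Tendsto (fun x => exp (-β * x) / β) atTop (nhds 0) := by
    simpa using (tendsto_exp_atBot.comp
      (tendsto_id.const_mul_atTop_of_neg (neg_neg_of_pos hβ))).div_const β
  exact squeeze_zero (fun x => setIntegral_nonneg measurableSet_Ici fun y _ => hf₀ y)
    (setIntegral_Ici_le_of_le_exp_neg_mul hβ hf₀ hf) hexp

lemma setIntegral_Ici_sq_mul_exp_le_of_le_exp_neg_mul (hf₀ : ∀ y, 0 ≤ f y)
    (hf : ∀ y, f y ≤ exp (-β * y)) :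
    ∫ x in Ici (0 : ℝ), f x ^ 2 * exp (β * x) ≤ 1 / β := by
  have hpt : ∀ x, f x ^ 2 * exp (β * x) ≤ exp (-β * x) := fun x =>
    calc f x ^ 2 * exp (β * x) ≤ exp (-β * x) ^ 2 * exp (β * x) := by gcongr; exacts [hf₀ x, hf x]
      _ = exp (-β * x) := by rw [sq, mul_assoc, ← exp_add]; ring_nf; rw [exp_zero, mul_one]
  calc ∫ x in Ici (0 : ℝ), f x ^ 2 * exp (β * x) ≤ ∫ x in Ici (0 : ℝ), exp (-β * x) :=
        integral_mono_of_nonneg (ae_of_all _ fun x => by positivity)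
          (Iff.mpr integrableOn_Ici_iff_integrableOn_Ioi (exp_neg_integrableOn_Ioi 0 hβ))
          (ae_of_all _ hpt)
    _ = 1 / β := by rw [integral_Ici_exp_neg_mul hβ]; simp

end ExpDominated

lemma sq_min_abs_sub_min_abs_le (c a b : ℝ) : (min c |a| - min c |b|) ^ 2 ≤ (a - b) ^ 2 :=
  sq_le_sq.2 <| calc
    |(min c |a| - min c |b|)| ≤ max |c - c| |(|a| - |b|)| := abs_min_sub_min_le_max _ _ _ _
    _ = |(|a| - |b|)| := by simp
    _ ≤ |a - b| := abs_abs_sub_abs_le_abs_sub a b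

lemma integral_sq_min_abs_sub_min_abs_mul_le {α : Type*} [MeasurableSpace α] {μ : Measure α}
    {c g₁ g₂ w : α → ℝ} (hw : ∀ x, 0 ≤ w x) (hint : Integrable (fun x => (g₁ x - g₂ x) ^ 2 * w x) μ) :
    ∫ x, (min (c x) |g₁ x| - min (c x) |g₂ x|) ^ 2 * w x ∂μ ≤ ∫ x, (g₁ x - g₂ x) ^ 2 * w x ∂μ :=
  integral_mono_of_nonneg (ae_of_all _ fun x => mul_nonneg (sq_nonneg _) (hw x)) hint
    (ae_of_all _ fun x => mul_le_mul_of_nonneg_right (sq_min_abs_sub_min_abs_le _ _ _) (hw x))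

theorem stmt18_general
    (β : ℝ) (hβ : 0 < β) (h' : ℝ → ℝ) :
    -- σ¹(h) has long rate zero:
    (Tendsto (fun x => ∫ y in Set.Ici x, min (Real.exp (-β * y)) |h' y|) atTop (nhds 0)) ∧
    -- ‖σ¹(h)‖²_β ≤ 1/β:
    ((∫ x in Set.Ici (0:ℝ), (min (Real.exp (-β * x)) |h' x|) ^ 2 * Real.exp (β * x))
        ≤ 1 / β) ∧
    -- Lipschitz bound ‖σ¹(h₁) − σ¹(h₂)‖²_β ≤ ‖h₁ − h₂‖²_β:
    (∀ h₁' h₂' : ℝ → ℝ, Measurable h₁' → Measurable h₂' →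
      IntegrableOn (fun x => (h₁' x - h₂' x) ^ 2 * Real.exp (β * x)) (Set.Ici 0) →
      (∫ x in Set.Ici (0:ℝ),
          (min (Real.exp (-β * x)) |h₁' x| - min (Real.exp (-β * x)) |h₂' x|) ^ 2
            * Real.exp (β * x))
        ≤ ∫ x in Set.Ici (0:ℝ), (h₁' x - h₂' x) ^ 2 * Real.exp (β * x)) ∧
    -- σ¹(c) = 0 for constant functions c (whose derivative vanishes):
    (∀ x : ℝ, (∫ y in Set.Ici x, min (Real.exp (-β * y)) |(0:ℝ)|) = 0) := by
  have hnonneg : ∀ y, 0 ≤ min (exp (-β * y)) |h' y| := fun y =>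
    le_min (exp_nonneg _) (abs_nonneg _)
  have hle : ∀ y, min (exp (-β * y)) |h' y| ≤ exp (-β * y) := fun y => min_le_left _ _
  exact ⟨tendsto_setIntegral_Ici_of_le_exp_neg_mul hβ hnonneg hle,
    setIntegral_Ici_sq_mul_exp_le_of_le_exp_neg_mul hβ hnonneg hle,
    fun _ _ _ _ hint => integral_sq_min_abs_sub_min_abs_mul_le (fun _ => (exp_pos _).le) hint,
    fun x => by simp [(exp_pos _).le]⟩

/-- The HJMM volatility example `σ¹(h)(x) = ∫ₓ^∞ min(e^{−βy}, |h'(y)|) dy`: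
it has long rate zero, `‖σ¹(h)‖²_β ≤ 1/β` (since `σ¹(h)'(x) = −min(e^{−βx}, |h'(x)|)`,
the squared β-norm is the stated integral), it is 1-Lipschitz in the β-norm, and it
vanishes on constant functions. -/
theorem stmt18
    (β : ℝ) (hβ : 0 < β) (h' : ℝ → ℝ) (hmeas : Measurable h')
    (hint : IntegrableOn (fun x => (h' x) ^ 2 * Real.exp (β * x)) (Set.Ici 0)) :
    -- σ¹(h) has long rate zero:
    (Tendsto (fun x => ∫ y in Set.Ici x, min (Real.exp (-β * y)) |h' y|) atTop (nhds 0)) ∧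
    -- ‖σ¹(h)‖²_β ≤ 1/β:
    ((∫ x in Set.Ici (0:ℝ), (min (Real.exp (-β * x)) |h' x|) ^ 2 * Real.exp (β * x))
        ≤ 1 / β) ∧
    -- Lipschitz bound ‖σ¹(h₁) − σ¹(h₂)‖²_β ≤ ‖h₁ − h₂‖²_β:
    (∀ h₁' h₂' : ℝ → ℝ, Measurable h₁' → Measurable h₂' →
      IntegrableOn (fun x => (h₁' x - h₂' x) ^ 2 * Real.exp (β * x)) (Set.Ici 0) →
      (∫ x in Set.Ici (0:ℝ),
          (min (Real.exp (-β * x)) |h₁' x| - min (Real.exp (-β * x)) |h₂' x|) ^ 2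
            * Real.exp (β * x))
        ≤ ∫ x in Set.Ici (0:ℝ), (h₁' x - h₂' x) ^ 2 * Real.exp (β * x)) ∧
    -- σ¹(c) = 0 for constant functions c (whose derivative vanishes):
    (∀ x : ℝ, (∫ y in Set.Ici x, min (Real.exp (-β * y)) |(0:ℝ)|) = 0) :=
  stmt18_general β hβ h'
end
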